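/- Let A = [[0,−1],[1,0]], B = [[0,−1],[1,1]], C = [[0,1],[1,0]] in GL(2,ℤ), and let H = {M ∈ GL(2,ℤ) : m₂₁ ∈ 2ℤ}. Then H is the free product of the dihedral group ⟨−I, AC⟩ of order 4 with the dihedral group B⟨A,C⟩B⁻¹ of order 8, amalgamated over the cyclic group ⟨−I⟩ of order 2. -/

import Mathlib

/-- An element of `GL(2,ℤ)` from a matrix and an explicit inverse. -/
def mkGL (M N : Matrix (Fin 2) (Fin 2) ℤ) (h1 : M * N = 1) (h2 : N * M = 1) :
    Matrix.GeneralLinearGroup (Fin 2) ℤ :=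
  ⟨M, N, h1, h2⟩

/-- `A = [[0,−1],[1,0]]`. -/
def matA : Matrix.GeneralLinearGroup (Fin 2) ℤ :=
  mkGL !![0, -1; 1, 0] !![0, 1; -1, 0] (by decide) (by decide)

/-- `B = [[0,−1],[1,1]]`. -/
def matB : Matrix.GeneralLinearGroup (Fin 2) ℤ :=
  mkGL !![0, -1; 1, 1] !![1, 1; -1, 0] (by decide) (by decide)

/-- `C = [[0,1],[1,0]]`. -/
def matC : Matrix.GeneralLinearGroup (Fin 2) ℤ :=
  mkGL !![0, 1; 1, 0] !![0, 1; 1, 0] (by decide) (by decide)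

/-- `−I` in `GL(2,ℤ)`. -/
def matNegI : Matrix.GeneralLinearGroup (Fin 2) ℤ :=
  mkGL !![-1, 0; 0, -1] !![-1, 0; 0, -1] (by decide) (by decide)

/-- The dihedral group `⟨−I, AC⟩` of order 4. -/
def G₁ : Subgroup (Matrix.GeneralLinearGroup (Fin 2) ℤ) :=
  Subgroup.closure {matNegI, matA * matC}

/-- The dihedral group `B⟨A,C⟩B⁻¹` of order 8. -/
def G₂ : Subgroup (Matrix.GeneralLinearGroup (Fin 2) ℤ) :=
  Subgroup.closure {matB * matA * matB⁻¹, matB * matC * matB⁻¹}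

/-- The cyclic group `⟨−I⟩` of order 2. -/
def Z₀ : Subgroup (Matrix.GeneralLinearGroup (Fin 2) ℤ) :=
  Subgroup.closure {matNegI}

-- ==== infrastructure ====
abbrev GL2 := Matrix.GeneralLinearGroup (Fin 2) ℤ

instance : DecidableEq GL2 := fun _ _ => decidable_of_iff _ Units.ext_iff.symm

def matD : GL2 := matA * matC          -- diag(-1,1)
def matR : GL2 := matB * matA * matB⁻¹ -- order 4
def matS : GL2 := matB * matC * matB⁻¹ -- order 2

def psi1fun : DihedralGroup 2 → GL2
  | .r i => matNegI ^ i.val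
  | .sr i => matD * matNegI ^ i.val

def psi1 : DihedralGroup 2 →* GL2 where
  toFun := psi1fun
  map_one' := by decide
  map_mul' := by decide

def psi2fun : DihedralGroup 4 → GL2
  | .r i => matR ^ i.val
  | .sr i => matS * matR ^ i.val

def psi2 : DihedralGroup 4 →* GL2 where
  toFun := psi2fun
  map_one' := by decide
  map_mul' := by decide

lemma psi1_inj : Function.Injective psi1 := by decide

lemma psi2_inj : Function.Injective psi2 := by decide

lemma psi1_range : psi1.range = G₁ := by
  apply le_antisymm
  · rintro _ ⟨x, rfl⟩
    have h2 : ∀ j : ZMod 2, j = 0 ∨ j = 1 := by decide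
    have hm : matNegI ∈ G₁ := Subgroup.subset_closure (by left; rfl)
    have hd : matD ∈ G₁ := Subgroup.subset_closure (by right; rfl)
    rcases x with i | i <;> rcases h2 i with rfl | rfl
    · exact (show psi1 (.r 0) = 1 by decide) ▸ one_mem _
    · exact (show psi1 (.r 1) = matNegI by decide) ▸ hm
    · exact (show psi1 (.sr 0) = matD by decide) ▸ hd
    · exact (show psi1 (.sr 1) = matD * matNegI by decide) ▸ mul_mem hd hm
  · rw [G₁, Subgroup.closure_le]
    rintro x (rfl | rfl)
    · exact ⟨.r 1, by decide⟩
    · exact ⟨.sr 0, by decide⟩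

lemma psi2_range : psi2.range = G₂ := by
  apply le_antisymm
  · rintro _ ⟨x, rfl⟩
    have h4 : ∀ j : ZMod 4, j = 0 ∨ j = 1 ∨ j = 2 ∨ j = 3 := by decide
    have hr : matR ∈ G₂ := Subgroup.subset_closure (by left; rfl)
    have hs : matS ∈ G₂ := Subgroup.subset_closure (by right; rfl)
    have key : ∀ j : ZMod 4, matR ^ j.val ∈ G₂ := by
      intro j
      exact pow_mem hr _
    rcases x with i | i
    · exact key i
    · exact mul_mem hs (key i)
  · rw [G₂, Subgroup.closure_le]
    rintro x (rfl | rfl)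
    · exact ⟨.r 1, by decide⟩
    · exact ⟨.sr 0, by decide⟩

lemma mem_G₁_iff {x : GL2} : x ∈ G₁ ↔ ∃ a, psi1 a = x := by
  rw [← psi1_range]; rfl

lemma mem_G₂_iff {x : GL2} : x ∈ G₂ ↔ ∃ a, psi2 a = x := by
  rw [← psi2_range]; rfl

noncomputable def iso1 : ↥G₁ ≃* DihedralGroup 2 :=
  (MulEquiv.subgroupCongr psi1_range.symm).trans (MonoidHom.ofInjective psi1_inj).symm

noncomputable def iso2 : ↥G₂ ≃* DihedralGroup 4 :=
  (MulEquiv.subgroupCongr psi2_range.symm).trans (MonoidHom.ofInjective psi2_inj).symm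

lemma card_G₁ : Nat.card ↥G₁ = 4 := by
  rw [Nat.card_congr iso1.toEquiv, Nat.card_eq_fintype_card]
  decide

lemma card_G₂ : Nat.card ↥G₂ = 8 := by
  rw [Nat.card_congr iso2.toEquiv, Nat.card_eq_fintype_card]
  decide

lemma card_Z₀ : Nat.card ↥Z₀ = 2 := by
  rw [Z₀, ← Subgroup.zpowers_eq_closure, Nat.card_zpowers]
  refine orderOf_eq_prime (by decide) (by decide)

lemma mem_Z₀_iff {x : GL2} : x ∈ Z₀ ↔ x = 1 ∨ x = matNegI := by
  constructor
  · intro hx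
    induction hx using Subgroup.closure_induction with
    | mem g hg => right; simpa using hg
    | one => left; rfl
    | mul a b _ _ ha hb => rcases ha with rfl|rfl <;> rcases hb with rfl|rfl <;> first | (left; decide) | (right; decide)
    | inv a _ ha => rcases ha with rfl|rfl <;> first | (left; decide) | (right; decide)
  · rintro (rfl | rfl)
    · exact one_mem _
    · exact Subgroup.subset_closure rfl

lemma Z₀_le_G₁ : Z₀ ≤ G₁ := by
  rw [Z₀, Subgroup.closure_le]
  rintro x rfl
  exact Subgroup.subset_closure (by left; rfl)

lemma Z₀_le_G₂ : Z₀ ≤ G₂ := by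
  rw [Z₀, Subgroup.closure_le]
  rintro x rfl
  exact mem_G₂_iff.2 ⟨.r 2, by decide⟩

lemma inf_eq : G₁ ⊓ G₂ = Z₀ := by
  apply le_antisymm
  · rintro x ⟨h1, h2⟩
    obtain ⟨a, rfl⟩ := mem_G₁_iff.1 h1
    obtain ⟨b, hb⟩ := mem_G₂_iff.1 h2
    have key : ∀ a b, psi1 a = psi2 b → psi1 a = 1 ∨ psi1 a = matNegI := by decide
    exact mem_Z₀_iff.2 (key a b hb.symm)
  · exact le_inf Z₀_le_G₁ Z₀_le_G₂

-- type of a letter: `true` for G₁ ∖ Z₀, `false` for G₂ ∖ Z₀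
def Sty : Bool → GL2 → Prop
  | true, g => g = matD ∨ g = matNegI * matD
  | false, g => g = matR ∨ g = matNegI * matR ∨ g = matS ∨ g = matNegI * matS ∨
      g = matS * matR ∨ g = matNegI * (matS * matR)

instance : ∀ t g, Decidable (Sty t g) := by
  rintro (_|_) g <;> dsimp [Sty] <;> infer_instance

def good : Bool → (Fin 2 → ℤ) → Prop
  | true, v => 0 < v 0 * v 1
  | false, v => v 0 * v 1 < 0

lemma step {t : Bool} {g : GL2} (hg : Sty t g) (v : Fin 2 → ℤ) (hv : good (!t) v) :
    good t ((g : Matrix (Fin 2) (Fin 2) ℤ).mulVec v) := by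
  have e1 : (matD : Matrix (Fin 2) (Fin 2) ℤ) = !![-1,0;0,1] := by decide
  have e2 : ((matNegI * matD : GL2) : Matrix (Fin 2) (Fin 2) ℤ) = !![1,0;0,-1] := by decide
  have e3 : (matR : Matrix (Fin 2) (Fin 2) ℤ) = !![-1,-1;2,1] := by decide
  have e4 : ((matNegI * matR : GL2) : Matrix (Fin 2) (Fin 2) ℤ) = !![1,1;-2,-1] := by decide
  have e5 : (matS : Matrix (Fin 2) (Fin 2) ℤ) = !![-1,-1;0,1] := by decide
  have e6 : ((matNegI * matS : GL2) : Matrix (Fin 2) (Fin 2) ℤ) = !![1,1;0,-1] := by decide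
  have e7 : ((matS * matR : GL2) : Matrix (Fin 2) (Fin 2) ℤ) = !![-1,0;2,1] := by decide
  have e8 : ((matNegI * (matS * matR) : GL2) : Matrix (Fin 2) (Fin 2) ℤ) = !![1,0;-2,-1] := by
    decide
  cases t <;> simp only [Sty] at hg <;> simp only [good, Bool.not_true, Bool.not_false] at hv ⊢ <;>
    rcases hg with rfl | rfl | rfl | rfl | rfl | rfl <;>
    simp [e1, e2, e3, e4, e5, e6, e7, e8, Matrix.mulVec, dotProduct,
      Fin.sum_univ_two] <;>
    nlinarith [sq_nonneg (v 0), sq_nonneg (v 1), sq_nonneg (v 0 + v 1), sq_nonneg (v 0 - v 1)]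

inductive Alt : Bool → Bool → List GL2 → Prop
  | single {a g} : Sty a g → Alt a a [g]
  | cons {a b g l} : Sty a g → Alt (!a) b l → Alt a b (g :: l)

lemma pingpong {a b : Bool} {l : List GL2} (h : Alt a b l) (v : Fin 2 → ℤ)
    (hv : good (!b) v) : good a ((l.prod : Matrix (Fin 2) (Fin 2) ℤ).mulVec v) := by
  induction h with
  | single hg => simpa using step hg v hv
  | cons hg _ ih =>
      rename_i a' b' g l _
      rw [List.prod_cons, Units.val_mul, ← Matrix.mulVec_mulVec]
      exact step hg _ (ih hv)

lemma Alt.snoc {a b : Bool} {l : List GL2} {g : GL2} (h : Alt a b l) (hg : Sty (!b) g) :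
    Alt a (!b) (l ++ [g]) := by
  induction h with
  | single hs => exact .cons hs (.single hg)
  | cons hs _ ih => exact .cons hs (ih hg)

lemma Alt.last_decomp {a b : Bool} {l : List GL2} (h : Alt a b l) :
    (a = b ∧ ∃ g, l = [g] ∧ Sty a g) ∨
      ∃ l' g, l = l' ++ [g] ∧ Sty b g ∧ Alt a (!b) l' := by
  induction h with
  | single hs => exact Or.inl ⟨rfl, _, rfl, hs⟩
  | cons hs h ih =>
      rename_i a b g l
      rcases ih with ⟨hab, g0, rfl, hs0⟩ | ⟨l', g0, rfl, hs0, halt⟩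
      · refine Or.inr ⟨[g], g0, rfl, hab ▸ hs0, ?_⟩
        have : a = !b := by subst hab; simp
        exact this ▸ Alt.single hs
      · exact Or.inr ⟨g :: l', g0, rfl, hs0, .cons hs halt⟩

lemma matNegI_val : (matNegI : Matrix (Fin 2) (Fin 2) ℤ) = !![-1,0;0,-1] := by decide

lemma Alt.pure_ne {a : Bool} {l : List GL2} (h : Alt a a l) :
    l.prod ≠ 1 ∧ l.prod ≠ matNegI := by
  cases a
  · have hv : good (!false) ![1, 1] := by norm_num [good]
    have := pingpong h ![1,1] hv
    constructor <;> rintro heq <;> rw [heq] at this <;>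
      simp [good, matNegI_val, Matrix.mulVec, dotProduct, Fin.sum_univ_two] at this
  · have hv : good (!true) ![1, -1] := by norm_num [good]
    have := pingpong h ![1,-1] hv
    constructor <;> rintro heq <;> rw [heq] at this <;>
      simp [good, matNegI_val, Matrix.mulVec, dotProduct, Fin.sum_univ_two] at this

def pick (g : GL2) : GL2 := if g = matS ∨ g = matNegI * matS then matR else matS

lemma pick_Sty (g : GL2) : Sty false (pick g) := by
  unfold pick; split <;> simp [Sty]

lemma pick_inv_Sty (g : GL2) : Sty false (pick g)⁻¹ := by
  unfold pick; split <;> decide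

lemma pick_mul_right {g : GL2} (hg : Sty false g) : Sty false (g * (pick g)⁻¹) := by
  rcases hg with rfl | rfl | rfl | rfl | rfl | rfl <;> decide

lemma pick_mul_left {g : GL2} (hg : Sty false g) : Sty false (pick g * g) := by
  rcases hg with rfl | rfl | rfl | rfl | rfl | rfl <;> decide

lemma negI_central (x : GL2) : x * matNegI * x⁻¹ = matNegI := by
  have h : matNegI = (-1 : GL2) := by decide
  rw [h, mul_neg, mul_one, neg_mul, mul_inv_cancel]

theorem alt_prod_ne {a b : Bool} {l : List GL2} (h : Alt a b l) :
    l.prod ≠ 1 ∧ l.prod ≠ matNegI := by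
  cases a <;> cases b
  · exact h.pure_ne
  · -- a = false, b = true : starts with a G₂ letter, ends with a G₁ letter
    cases h with
    | cons hs halt =>
        rename_i g l₂
        set p := pick g with hp
        have h2 : Alt false false ((p * g) :: (l₂ ++ [p⁻¹])) :=
          .cons (pick_mul_left hs) (halt.snoc (pick_inv_Sty g))
        have hprod : ((p * g) :: (l₂ ++ [p⁻¹])).prod = p * (g :: l₂).prod * p⁻¹ := by
          simp [List.prod_append, List.prod_cons, mul_assoc]
        constructor <;> rintro heq <;> rcases h2.pure_ne with ⟨h1', h2'⟩
        · exact h1' (by rw [hprod, heq, mul_one, mul_inv_cancel])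
        · exact h2' (by rw [hprod, heq, negI_central])
  · -- a = true, b = false
    rcases h.last_decomp with ⟨hab, _⟩ | ⟨l', g, rfl, hs, halt⟩
    · exact absurd hab (by simp)
    · set p := pick g with hp
      have h2 : Alt false false (p :: (l' ++ [g * p⁻¹])) :=
        .cons (pick_Sty g) ((by simpa using halt.snoc (b := true) (pick_mul_right hs)))
      have hprod : (p :: (l' ++ [g * p⁻¹])).prod = p * (l' ++ [g]).prod * p⁻¹ := by
        simp [List.prod_append, List.prod_cons, mul_assoc]
      constructor <;> rintro heq <;> rcases h2.pure_ne with ⟨h1', h2'⟩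
      · exact h1' (by rw [hprod, heq, mul_one, mul_inv_cancel])
      · exact h2' (by rw [hprod, heq, negI_central])
  · exact h.pure_ne

-- ==== generation / descent ====

def Ssup : Subgroup GL2 := G₁ ⊔ G₂

lemma matD_mem : matD ∈ Ssup := Subgroup.mem_sup_left (Subgroup.subset_closure (by right; rfl))
lemma matNegI_mem : matNegI ∈ Ssup :=
  Subgroup.mem_sup_left (Subgroup.subset_closure (by left; rfl))
lemma matR_mem : matR ∈ Ssup := Subgroup.mem_sup_right (Subgroup.subset_closure (by left; rfl))
lemma matS_mem : matS ∈ Ssup := Subgroup.mem_sup_right (Subgroup.subset_closure (by right; rfl))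

def matE : GL2 := matD * matS
def matF : GL2 := matD * matS * matR

lemma matE_mem : matE ∈ Ssup := mul_mem matD_mem matS_mem
lemma matF_mem : matF ∈ Ssup := mul_mem (mul_mem matD_mem matS_mem) matR_mem

lemma one_val : ((1 : GL2) : Matrix (Fin 2) (Fin 2) ℤ) = !![1,0;0,1] := by decide
lemma matE_val : (matE : Matrix (Fin 2) (Fin 2) ℤ) = !![1,1;0,1] := by decide
lemma matF_val : (matF : Matrix (Fin 2) (Fin 2) ℤ) = !![1,0;2,1] := by decide

lemma Epow (k : ℤ) : ((matE ^ k : GL2) : Matrix (Fin 2) (Fin 2) ℤ) = !![1,k;0,1] := by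
  induction k using Int.induction_on with
  | zero => rw [zpow_zero]; exact one_val
  | succ k ih =>
      rw [zpow_add_one, Units.val_mul, ih, matE_val, Matrix.mul_fin_two]
      ext i j
      fin_cases i <;> fin_cases j <;> simp <;> ring
  | pred k ih =>
      rw [zpow_sub_one, Units.val_mul, ih]
      have h : ((matE⁻¹ : GL2) : Matrix (Fin 2) (Fin 2) ℤ) = !![1,-1;0,1] := by decide
      rw [h, Matrix.mul_fin_two]
      ext i j
      fin_cases i <;> fin_cases j <;> simp <;> ring

lemma Fpow (k : ℤ) : ((matF ^ k : GL2) : Matrix (Fin 2) (Fin 2) ℤ) = !![1,0;2*k,1] := by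
  induction k using Int.induction_on with
  | zero => rw [zpow_zero]; exact one_val
  | succ k ih =>
      rw [zpow_add_one, Units.val_mul, ih, matF_val, Matrix.mul_fin_two]
      ext i j
      fin_cases i <;> fin_cases j <;> simp <;> ring
  | pred k ih =>
      rw [zpow_sub_one, Units.val_mul, ih]
      have h : ((matF⁻¹ : GL2) : Matrix (Fin 2) (Fin 2) ℤ) = !![1,0;-2,1] := by decide
      rw [h, Matrix.mul_fin_two]
      ext i j
      fin_cases i <;> fin_cases j <;> simp <;> ring

lemma det_pm (M : GL2) : Matrix.det (M : Matrix (Fin 2) (Fin 2) ℤ) = 1 ∨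
    Matrix.det (M : Matrix (Fin 2) (Fin 2) ℤ) = -1 := by
  have h : Matrix.det (M : Matrix (Fin 2) (Fin 2) ℤ) *
      Matrix.det ((M⁻¹ : GL2) : Matrix (Fin 2) (Fin 2) ℤ) = 1 := by
    rw [← Matrix.det_mul, ← Units.val_mul, mul_inv_cancel, one_val]
    norm_num [Matrix.det_fin_two]
  exact Int.isUnit_iff.mp (IsUnit.of_mul_eq_one _ h)

lemma diag_mem {a d : ℤ} (ha : a = 1 ∨ a = -1) (hd : d = 1 ∨ d = -1) :
    ∃ u : GL2, u ∈ Ssup ∧ (u : Matrix (Fin 2) (Fin 2) ℤ) = !![a,0;0,d] := by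
  rcases ha with rfl | rfl <;> rcases hd with rfl | rfl
  · exact ⟨1, one_mem _, one_val⟩
  · exact ⟨matNegI * matD, mul_mem matNegI_mem matD_mem, by decide⟩
  · exact ⟨matD, matD_mem, by decide⟩
  · exact ⟨matNegI, matNegI_mem, by decide⟩

lemma upper_tri_mem (M : GL2) (hc : (M : Matrix (Fin 2) (Fin 2) ℤ) 1 0 = 0) : M ∈ Ssup := by
  have hdet := det_pm M
  rw [Matrix.det_fin_two, hc, mul_zero, sub_zero] at hdet
  have had : ((M : Matrix (Fin 2) (Fin 2) ℤ) 0 0 = 1 ∨ (M : Matrix (Fin 2) (Fin 2) ℤ) 0 0 = -1) ∧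
      ((M : Matrix (Fin 2) (Fin 2) ℤ) 1 1 = 1 ∨ (M : Matrix (Fin 2) (Fin 2) ℤ) 1 1 = -1) := by
    rcases hdet with h | h
    · rcases Int.eq_one_or_neg_one_of_mul_eq_one' h with ⟨h1, h2⟩ | ⟨h1, h2⟩ <;>
        exact ⟨by omega, by omega⟩
    · have h' : (M : Matrix (Fin 2) (Fin 2) ℤ) 0 0 * (-(M : Matrix (Fin 2) (Fin 2) ℤ) 1 1) = 1 :=
        by linarith
      rcases Int.eq_one_or_neg_one_of_mul_eq_one' h' with ⟨h1, h2⟩ | ⟨h1, h2⟩ <;>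
        exact ⟨by omega, by omega⟩
  obtain ⟨u, hu, huval⟩ := diag_mem had.1 had.2
  have key : M = u * matE ^ ((M : Matrix (Fin 2) (Fin 2) ℤ) 0 0 *
      (M : Matrix (Fin 2) (Fin 2) ℤ) 0 1) := by
    apply Units.ext
    rw [Units.val_mul, huval, Epow, Matrix.mul_fin_two]
    rw [Matrix.eta_fin_two (M : Matrix (Fin 2) (Fin 2) ℤ), hc]
    ext i j
    fin_cases i <;> fin_cases j <;> simp <;> rcases had.1 with h | h <;> rw [h] <;> ring
  rw [key]
  exact mul_mem hu (zpow_mem matE_mem _)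

lemma reduce1 {a c : ℤ} (hc : c ≠ 0) (h : c.natAbs < a.natAbs) :
    ∃ t : ℤ, (t = 1 ∨ t = -1) ∧ (a + t * c).natAbs < a.natAbs := by
  rcases le_or_gt 0 a with ha | ha <;> rcases le_or_gt 0 c with hcc | hcc
  · exact ⟨-1, Or.inr rfl, by omega⟩
  · exact ⟨1, Or.inl rfl, by omega⟩
  · exact ⟨1, Or.inl rfl, by omega⟩
  · exact ⟨-1, Or.inr rfl, by omega⟩

lemma reduce2 {a c : ℤ} (ha : a ≠ 0) (h : a.natAbs < c.natAbs) :
    ∃ t : ℤ, (t = 1 ∨ t = -1) ∧ (c + t * (2 * a)).natAbs < c.natAbs := by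
  rcases le_or_gt 0 a with ha' | ha' <;> rcases le_or_gt 0 c with hcc | hcc
  · exact ⟨-1, Or.inr rfl, by omega⟩
  · exact ⟨1, Or.inl rfl, by omega⟩
  · exact ⟨1, Or.inl rfl, by omega⟩
  · exact ⟨-1, Or.inr rfl, by omega⟩

theorem mem_sup_of_even : ∀ (n : ℕ) (M : GL2),
    ((M : Matrix (Fin 2) (Fin 2) ℤ) 0 0).natAbs + ((M : Matrix (Fin 2) (Fin 2) ℤ) 1 0).natAbs ≤ n →
    2 ∣ (M : Matrix (Fin 2) (Fin 2) ℤ) 1 0 → M ∈ Ssup := by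
  intro n
  induction n with
  | zero =>
      intro M hm _
      exact upper_tri_mem M (by omega)
  | succ n ih =>
      intro M hm heven
      by_cases hc : (M : Matrix (Fin 2) (Fin 2) ℤ) 1 0 = 0
      · exact upper_tri_mem M hc
      have hodd : ¬ (2 ∣ (M : Matrix (Fin 2) (Fin 2) ℤ) 0 0) := by
        intro h2a
        have hdet := det_pm M
        rw [Matrix.det_fin_two] at hdet
        have h2 : (2:ℤ) ∣ (M : Matrix (Fin 2) (Fin 2) ℤ) 0 0 * (M : Matrix (Fin 2) (Fin 2) ℤ) 1 1 -
            (M : Matrix (Fin 2) (Fin 2) ℤ) 0 1 * (M : Matrix (Fin 2) (Fin 2) ℤ) 1 0 :=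
          dvd_sub (h2a.mul_right _) (heven.mul_left _)
        rcases hdet with h | h <;> rw [h] at h2 <;> norm_num at h2
      have hane : ((M : Matrix (Fin 2) (Fin 2) ℤ) 0 0).natAbs ≠
          ((M : Matrix (Fin 2) (Fin 2) ℤ) 1 0).natAbs := by
        intro h
        rcases Int.natAbs_eq_natAbs_iff.mp h with h | h <;> omega
      have ha0 : (M : Matrix (Fin 2) (Fin 2) ℤ) 0 0 ≠ 0 := by intro h0; omega
      rcases lt_or_gt_of_ne hane with hlt | hgt
      · -- |a| < |c| : use F^t
        obtain ⟨t, _, hdec⟩ := reduce2 ha0 hlt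
        have hval : ((matF ^ t * M : GL2) : Matrix (Fin 2) (Fin 2) ℤ) =
            !![1,0;2*t,1] * (M : Matrix (Fin 2) (Fin 2) ℤ) := by
          rw [Units.val_mul, Fpow]
        have h00 : ((matF ^ t * M : GL2) : Matrix (Fin 2) (Fin 2) ℤ) 0 0 =
            (M : Matrix (Fin 2) (Fin 2) ℤ) 0 0 := by
          rw [hval, Matrix.eta_fin_two (M : Matrix (Fin 2) (Fin 2) ℤ), Matrix.mul_fin_two]
          simp
        have h10 : ((matF ^ t * M : GL2) : Matrix (Fin 2) (Fin 2) ℤ) 1 0 =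
            (M : Matrix (Fin 2) (Fin 2) ℤ) 1 0 + t * (2 * (M : Matrix (Fin 2) (Fin 2) ℤ) 0 0) := by
          rw [hval, Matrix.eta_fin_two (M : Matrix (Fin 2) (Fin 2) ℤ), Matrix.mul_fin_two]
          simp
          ring
        rw [← h10] at hdec
        have hmem : (matF ^ t * M : GL2) ∈ Ssup := by
          apply ih _ _ _
          · rw [h00]; omega
          · rw [h10]
            obtain ⟨k, hk⟩ := heven
            exact ⟨k + t * (M : Matrix (Fin 2) (Fin 2) ℤ) 0 0, by rw [hk]; ring⟩
        have hM : M = (matF ^ t)⁻¹ * (matF ^ t * M) := by rw [inv_mul_cancel_left]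
        rw [hM]
        exact mul_mem (inv_mem (zpow_mem matF_mem _)) hmem
      · -- |c| < |a| : use E^t
        obtain ⟨t, _, hdec⟩ := reduce1 hc hgt
        have hval : ((matE ^ t * M : GL2) : Matrix (Fin 2) (Fin 2) ℤ) =
            !![1,t;0,1] * (M : Matrix (Fin 2) (Fin 2) ℤ) := by
          rw [Units.val_mul, Epow]
        have h00 : ((matE ^ t * M : GL2) : Matrix (Fin 2) (Fin 2) ℤ) 0 0 =
            (M : Matrix (Fin 2) (Fin 2) ℤ) 0 0 + t * (M : Matrix (Fin 2) (Fin 2) ℤ) 1 0 := by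
          rw [hval, Matrix.eta_fin_two (M : Matrix (Fin 2) (Fin 2) ℤ), Matrix.mul_fin_two]
          simp
        have h10 : ((matE ^ t * M : GL2) : Matrix (Fin 2) (Fin 2) ℤ) 1 0 =
            (M : Matrix (Fin 2) (Fin 2) ℤ) 1 0 := by
          rw [hval, Matrix.eta_fin_two (M : Matrix (Fin 2) (Fin 2) ℤ), Matrix.mul_fin_two]
          simp
        rw [← h00] at hdec
        have hmem : (matE ^ t * M : GL2) ∈ Ssup := by
          apply ih _ _ _
          · rw [h10]; omega
          · rw [h10]; exact heven
        have hM : M = (matE ^ t)⁻¹ * (matE ^ t * M) := by rw [inv_mul_cancel_left]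
        rw [hM]
        exact mul_mem (inv_mem (zpow_mem matE_mem _)) hmem

-- ==== the pushout ====

open Monoid

def Gb : Bool → Subgroup GL2 := fun i => bif i then G₁ else G₂

lemma Z₀_le_Gb : ∀ i, Z₀ ≤ Gb i := by
  rintro (_ | _)
  · exact Z₀_le_G₂
  · exact Z₀_le_G₁

def φb : ∀ i, ↥Z₀ →* ↥(Gb i) := fun i => Subgroup.inclusion (Z₀_le_Gb i)

lemma φb_inj : ∀ i, Function.Injective (φb i) :=
  fun i => Subgroup.inclusion_injective (Z₀_le_Gb i)

def ψ : PushoutI φb →* GL2 :=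
  PushoutI.lift (fun i => (Gb i).subtype) Z₀.subtype (fun i => by ext x; rfl)

lemma ψ_of (i : Bool) (g : ↥(Gb i)) : ψ (PushoutI.of i g) = (g : GL2) :=
  PushoutI.lift_of _ _ _ _

lemma ψ_base (z : ↥Z₀) : ψ (PushoutI.base φb z) = (z : GL2) :=
  PushoutI.lift_base _ _ _ _

lemma ψ_range_le : ∀ x : PushoutI φb, ψ x ∈ Ssup := by
  intro x
  induction x using PushoutI.induction_on with
  | of i g =>
      rw [ψ_of]
      cases i
      · exact Subgroup.mem_sup_right g.2
      · exact Subgroup.mem_sup_left g.2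
  | base z => rw [ψ_base]; exact Subgroup.mem_sup_left (Z₀_le_G₁ z.2)
  | mul x y hx hy => rw [map_mul]; exact mul_mem hx hy

-- letters of normal words are honest ping-pong letters
lemma letter_Sty {i : Bool} {g : ↥(Gb i)} (h1 : (g : GL2) ≠ 1) (h2 : (g : GL2) ≠ matNegI) :
    Sty i (g : GL2) := by
  cases i
  · obtain ⟨a, ha⟩ := mem_G₂_iff.1 g.2
    have key : ∀ a : DihedralGroup 4, psi2 a = 1 ∨ psi2 a = matNegI ∨ Sty false (psi2 a) := by
      decide
    rcases key a with h | h | h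
    · exact absurd (ha ▸ h) h1
    · exact absurd (ha ▸ h) h2
    · exact ha ▸ h
  · obtain ⟨a, ha⟩ := mem_G₁_iff.1 g.2
    have key : ∀ a : DihedralGroup 2, psi1 a = 1 ∨ psi1 a = matNegI ∨ Sty true (psi1 a) := by
      decide
    rcases key a with h | h | h
    · exact absurd (ha ▸ h) h1
    · exact absurd (ha ▸ h) h2
    · exact ha ▸ h

def letterVal (p : Σ i, ↥(Gb i)) : GL2 := (p.2 : GL2)

lemma build_alt : ∀ (lst : List (Σ i, ↥(Gb i))) (g : Σ i, ↥(Gb i)),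
    (∀ p ∈ g :: lst, Sty p.1 (letterVal p)) →
    List.Chain' (fun a b => a.1 ≠ b.1) (g :: lst) →
    ∃ b, Alt g.1 b ((g :: lst).map letterVal) := by
  intro lst
  induction lst with
  | nil =>
      intro g hmem _
      exact ⟨g.1, .single (hmem g (List.mem_cons_self))⟩
  | cons g2 rest ih =>
      intro g hmem hchain
      obtain ⟨b, halt⟩ := ih g2 (fun p hp => hmem p (List.mem_cons_of_mem _ hp))
        hchain.tail
      have hne : g.1 ≠ g2.1 := List.isChain_cons_cons.mp hchain |>.1
      have h2 : g2.1 = !g.1 := by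
        cases hg : g.1 <;> cases hg2 : g2.1 <;> simp_all
      rw [h2] at halt
      exact ⟨b, .cons (hmem g (List.mem_cons_self)) halt⟩

lemma ψ_inj : Function.Injective ψ := by
  rw [injective_iff_map_eq_one]
  intro x hx
  obtain ⟨d⟩ := PushoutI.NormalWord.transversal_nonempty φb φb_inj
  classical
  set w := PushoutI.NormalWord.equiv (d := d) x with hw
  have hxw : w.prod = x := by
    rw [hw]
    exact (PushoutI.NormalWord.equiv (d := d)).symm_apply_apply x
  -- letters are nontrivial mod the base
  have hletters : ∀ p ∈ w.toList, (p.2 : GL2) ≠ 1 ∧ (p.2 : GL2) ≠ matNegI := by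
    intro p hp
    have hset : p.2 ∈ d.set p.1 := w.normalized p.1 p.2 hp
    have hne1 : p.2 ≠ 1 := w.toWord.ne_one p hp
    have hnr : p.2 ∉ (φb p.1).range := by
      intro ⟨z, hz⟩
      have hcompl := (d.compl p.1).existsUnique p.2
      obtain ⟨y, _, hy⟩ := hcompl
      have e1 := hy (⟨⟨p.2, ⟨z, hz⟩⟩, ⟨1, d.one_mem p.1⟩⟩) (by simp)
      have e2 := hy (⟨⟨1, one_mem _⟩, ⟨p.2, hset⟩⟩) (by simp)
      rw [← e2] at e1
      have := congrArg (fun q => (q.2 : ↥(Gb p.1))) e1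
      simp at this
      exact hne1 this.symm
    constructor
    · intro h1
      exact hne1 (Subtype.ext (by rw [h1]; rfl))
    · intro h2
      apply hnr
      exact ⟨⟨matNegI, Subgroup.subset_closure rfl⟩, Subtype.ext h2.symm⟩
  -- the product decomposition
  have hψx : ψ x = (w.head : GL2) * (w.toList.map letterVal).prod := by
    have key : ∀ l : List (Σ i, ↥(Gb i)),
        ψ (PushoutI.ofCoprodI (List.prod (l.map fun p => CoprodI.of p.snd))) =
          (l.map letterVal).prod := by
      intro l
      induction l with
      | nil => simp
      | cons p l ih =>
          simp only [List.map_cons, List.prod_cons, map_mul, ih, PushoutI.ofCoprodI_of, ψ_of]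
          rfl
    rw [← hxw, PushoutI.NormalWord.prod, map_mul, ψ_base]
    congr 1
    exact key w.toList
  rcases hl : w.toList with _ | ⟨g, rest⟩
  · -- empty word
    have : ψ x = (w.head : GL2) := by rw [hψx, hl]; simp
    have hhead : w.head = 1 := by
      apply Subtype.ext
      rw [← this, hx]; rfl
    rw [← hxw, PushoutI.NormalWord.prod, hhead]
    have : w.toWord.prod = 1 := by
      rw [CoprodI.Word.prod, hl]
      simp
    rw [this]
    simp
  · -- nonempty word: ping-pong
    exfalso
    obtain ⟨b, halt⟩ := build_alt rest g
      (fun p hp => letter_Sty (hletters p (hl ▸ hp)).1 (hletters p (hl ▸ hp)).2)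
      (hl ▸ w.toWord.chain_ne)
    have hne := alt_prod_ne halt
    have hhead : (w.head : GL2) = 1 ∨ (w.head : GL2) = matNegI := mem_Z₀_iff.1 w.head.2
    have hprod : (w.head : GL2) * ((g :: rest).map letterVal).prod = 1 := by
      rw [← hl, ← hψx, hx]
    rcases hhead with h | h
    · rw [h, one_mul] at hprod
      exact hne.1 hprod
    · rw [h] at hprod
      have hinv : matNegI * matNegI = 1 := by decide
      have hfin : ((g :: rest).map letterVal).prod = matNegI := by
        calc ((g :: rest).map letterVal).prod
            = (matNegI * matNegI) * ((g :: rest).map letterVal).prod := by rw [hinv, one_mul]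
          _ = matNegI * (matNegI * ((g :: rest).map letterVal).prod) := by rw [mul_assoc]
          _ = matNegI := by rw [hprod, mul_one]
      exact hne.2 hfin

-- ==== final assembly ====

lemma G₁_even : ∀ x ∈ G₁, (2:ℤ) ∣ (x : Matrix (Fin 2) (Fin 2) ℤ) 1 0 := by
  intro x hx
  obtain ⟨a, rfl⟩ := mem_G₁_iff.1 hx
  clear hx; revert a; decide

lemma G₂_even : ∀ x ∈ G₂, (2:ℤ) ∣ (x : Matrix (Fin 2) (Fin 2) ℤ) 1 0 := by
  intro x hx
  obtain ⟨a, rfl⟩ := mem_G₂_iff.1 hx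
  clear hx; revert a; decide

lemma sup_eq (H : Subgroup GL2)
    (hH : ∀ M : GL2, M ∈ H ↔ (2 : ℤ) ∣ (M : Matrix (Fin 2) (Fin 2) ℤ) 1 0) :
    G₁ ⊔ G₂ = H := by
  apply le_antisymm
  · apply sup_le
    · intro x hx; exact (hH x).2 (G₁_even x hx)
    · intro x hx; exact (hH x).2 (G₂_even x hx)
  · intro M hM
    exact mem_sup_of_even _ M le_rfl ((hH M).1 hM)

theorem univ_prop (H : Subgroup GL2)
    (hH : ∀ M : GL2, M ∈ H ↔ (2 : ℤ) ∣ (M : Matrix (Fin 2) (Fin 2) ℤ) 1 0)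
    (K : Type*) [Group K] (f₁ : ↥G₁ →* K) (f₂ : ↥G₂ →* K)
    (hagree : ∀ (g : GL2) (hg₁ : g ∈ G₁) (hg₂ : g ∈ G₂), f₁ ⟨g, hg₁⟩ = f₂ ⟨g, hg₂⟩) :
    ∃! f : ↥H →* K,
      (∀ (g : GL2) (hg₁ : g ∈ G₁) (hgH : g ∈ H), f ⟨g, hgH⟩ = f₁ ⟨g, hg₁⟩) ∧
      (∀ (g : GL2) (hg₂ : g ∈ G₂) (hgH : g ∈ H), f ⟨g, hgH⟩ = f₂ ⟨g, hg₂⟩) := by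
  have hSH : Ssup = H := sup_eq H hH
  have hrange : ψ.range = H := by
    apply le_antisymm
    · rintro _ ⟨x, rfl⟩
      exact hSH ▸ ψ_range_le x
    · rw [← hSH]
      apply sup_le
      · intro g hg; exact ⟨PushoutI.of true ⟨g, hg⟩, ψ_of _ _⟩
      · intro g hg; exact ⟨PushoutI.of false ⟨g, hg⟩, ψ_of _ _⟩
  let e : PushoutI φb ≃* ↥H :=
    (MonoidHom.ofInjective ψ_inj).trans (MulEquiv.subgroupCongr hrange)
  have he : ∀ p, ((e p : ↥H) : GL2) = ψ p := fun p => rfl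
  let fb : ∀ i, ↥(Gb i) →* K := fun i => match i with | true => f₁ | false => f₂
  have hcomp : ∀ i, (fb i).comp (φb i) = f₁.comp (Subgroup.inclusion Z₀_le_G₁) := by
    rintro (_ | _)
    · ext z
      exact (hagree z.1 (Z₀_le_G₁ z.2) (Z₀_le_G₂ z.2)).symm
    · rfl
  set F : PushoutI φb →* K := PushoutI.lift fb _ hcomp with hF
  set f₀ : ↥H →* K := F.comp (e.symm : ↥H ≃* PushoutI φb).toMonoidHom with hf₀
  have hprop1 : ∀ (g : GL2) (hg₁ : g ∈ G₁) (hgH : g ∈ H), f₀ ⟨g, hgH⟩ = f₁ ⟨g, hg₁⟩ := by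
    intro g hg1 hgH
    have hsymm : e.symm ⟨g, hgH⟩ = PushoutI.of true ⟨g, hg1⟩ := by
      rw [MulEquiv.symm_apply_eq]
      exact Subtype.ext (by rw [he]; exact (ψ_of true ⟨g, hg1⟩).symm)
    show F (e.symm ⟨g, hgH⟩) = f₁ ⟨g, hg1⟩
    rw [hsymm, hF, PushoutI.lift_of]
    rfl
  have hprop2 : ∀ (g : GL2) (hg₂ : g ∈ G₂) (hgH : g ∈ H), f₀ ⟨g, hgH⟩ = f₂ ⟨g, hg₂⟩ := by
    intro g hg2 hgH
    have hsymm : e.symm ⟨g, hgH⟩ = PushoutI.of false ⟨g, hg2⟩ := by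
      rw [MulEquiv.symm_apply_eq]
      exact Subtype.ext (by rw [he]; exact (ψ_of false ⟨g, hg2⟩).symm)
    show F (e.symm ⟨g, hgH⟩) = f₂ ⟨g, hg2⟩
    rw [hsymm, hF, PushoutI.lift_of]
    rfl
  refine ⟨f₀, ⟨hprop1, hprop2⟩, ?_⟩
  rintro f' ⟨h1', h2'⟩
  have hcl : Subgroup.closure ((G₁ : Set GL2) ∪ (G₂ : Set GL2)) ≤ H := by
    rw [← Subgroup.sup_eq_closure]
    exact le_of_eq (sup_eq H hH)
  have key : ∀ (xv : GL2) (hmem : xv ∈ Subgroup.closure ((G₁ : Set GL2) ∪ (G₂ : Set GL2)))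
      (hxH : xv ∈ H), f' ⟨xv, hxH⟩ = f₀ ⟨xv, hxH⟩ := by
    intro xv hmem
    induction hmem using Subgroup.closure_induction with
    | mem g hg =>
        intro hgH
        rcases hg with hg | hg
        · rw [h1' g hg hgH, hprop1 g hg hgH]
        · rw [h2' g hg hgH, hprop2 g hg hgH]
    | one =>
        intro h
        have h1 : (⟨1, h⟩ : ↥H) = 1 := rfl
        rw [h1, map_one, map_one]
    | mul x y hx hy ihx ihy =>
        intro h
        have hxH : x ∈ H := hcl hx
        have hyH : y ∈ H := hcl hy
        have hmul : (⟨x * y, h⟩ : ↥H) = ⟨x, hxH⟩ * ⟨y, hyH⟩ := rfl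
        rw [hmul, map_mul, map_mul, ihx hxH, ihy hyH]
    | inv x hx ihx =>
        intro h
        have hxH : x ∈ H := hcl hx
        have hinv : (⟨x⁻¹, h⟩ : ↥H) = (⟨x, hxH⟩ : ↥H)⁻¹ := rfl
        rw [hinv, map_inv, map_inv, ihx hxH]
  ext x
  obtain ⟨xv, hxv⟩ := x
  have hmem : xv ∈ Subgroup.closure ((G₁ : Set GL2) ∪ (G₂ : Set GL2)) := by
    rw [← Subgroup.sup_eq_closure]
    exact (sup_eq H hH).symm ▸ hxv
  exact key xv hmem hxv


/-- `H = {M ∈ GL(2,ℤ) : m₂₁ even}` is the free product of the dihedral group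
`⟨−I, AC⟩` of order 4 with the dihedral group `B⟨A,C⟩B⁻¹` of order 8, amalgamated over
the cyclic group `⟨−I⟩` of order 2.  The amalgam structure is expressed by: the two
factors have the asserted isomorphism types and orders, they generate `H`, they
intersect in `⟨−I⟩`, and the universal property of the amalgamated free product holds:
any pair of homomorphisms of the factors into a group `K` agreeing on the intersection
extends uniquely to `H`. -/
theorem GL2Z_even_entry_subgroup_amalgam
    (H : Subgroup (Matrix.GeneralLinearGroup (Fin 2) ℤ))
    (hH : ∀ M : Matrix.GeneralLinearGroup (Fin 2) ℤ,
      M ∈ H ↔ (2 : ℤ) ∣ (M : Matrix (Fin 2) (Fin 2) ℤ) 1 0) :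
    Nonempty (↥G₁ ≃* DihedralGroup 2) ∧ Nat.card ↥G₁ = 4 ∧
    Nonempty (↥G₂ ≃* DihedralGroup 4) ∧ Nat.card ↥G₂ = 8 ∧
    Nat.card ↥Z₀ = 2 ∧
    G₁ ⊔ G₂ = H ∧
    G₁ ⊓ G₂ = Z₀ ∧
    (∀ (K : Type*) [Group K] (f₁ : ↥G₁ →* K) (f₂ : ↥G₂ →* K),
      (∀ (g : Matrix.GeneralLinearGroup (Fin 2) ℤ) (hg₁ : g ∈ G₁) (hg₂ : g ∈ G₂),
        f₁ ⟨g, hg₁⟩ = f₂ ⟨g, hg₂⟩) →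
      ∃! f : ↥H →* K,
        (∀ (g : Matrix.GeneralLinearGroup (Fin 2) ℤ) (hg₁ : g ∈ G₁) (hgH : g ∈ H),
          f ⟨g, hgH⟩ = f₁ ⟨g, hg₁⟩) ∧
        (∀ (g : Matrix.GeneralLinearGroup (Fin 2) ℤ) (hg₂ : g ∈ G₂) (hgH : g ∈ H),
          f ⟨g, hgH⟩ = f₂ ⟨g, hg₂⟩)) := by
  exact ⟨⟨iso1⟩, card_G₁, ⟨iso2⟩, card_G₂, card_Z₀, sup_eq H hH, inf_eq,
    fun K _ f₁ f₂ hagree => univ_prop H hH K f₁ f₂ hagree⟩
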